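/- arXiv:1001.4569 — 2 statements merged into one kernel-verified Lean document; each statement's English description precedes it below -/
import Mathlib

section
/- Let x: M^n → Q^{n+1}_+ (n ≥ 1) be a spacelike frontal. Then the pull-back symmetric bilinear form ⟨dx, dx⟩ is non-degenerate at a point if and only if the Gauss map G_+ = Π_+ ∘ x is an immersion there; in particular, wherever ⟨dx,dx⟩ is non-degenerate, x itself is an immersion. -/
/-!
Differentiating `⟨x, x⟩ = 0` shows that `dx` takes values in `x^⊥`, and by assumption also in
`y^⊥`. A lightlike vector orthogonal to the lightlike `x` (with `x⁰ ≠ 0`) is a multiple of `x`,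
and `⟨x, y⟩ = 1` leaves no nonzero multiple of `x` in `y^⊥`. Hence `⟨dx v, dx v⟩ = 0` forces
`dx v = 0`, so `⟨dx, dx⟩` is non-degenerate exactly when `dx` is injective. The differential of
`z ↦ z / z⁰` at `x` has kernel `ℝ x`, so `dG₊ = dΠ₊ ∘ dx` is injective exactly when `dx` is.
-/

open scoped Manifold

noncomputable section

/-- The Lorentz–Minkowski inner product of signature `(-,+,…,+)` on `ℝ^{n+2}`. -/
def mink (n : ℕ) (z w : Fin (n + 2) → ℝ) : ℝ :=
  ∑ i, (if i = 0 then (-1 : ℝ) else 1) * z i * w i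

/-- `x : Mⁿ → Q^{n+1}_+` is a spacelike frontal with dual `y : Mⁿ → Q^{n+1}_-`:
`⟨x,x⟩ = ⟨y,y⟩ = 0`, `x⁰ > 0`, `y⁰ < 0`, `⟨x,y⟩ = 1` and `⟨dx,y⟩ = ⟨dy,x⟩ = 0`. -/
structure IsSpacelikeFrontalPair (n : ℕ) {M : Type*} [TopologicalSpace M]
    [ChartedSpace (EuclideanSpace ℝ (Fin n)) M] [IsManifold (𝓡 n) (⊤ : ℕ∞) M]
    (x y : M → Fin (n + 2) → ℝ) : Prop where
  smooth_x : ContMDiff (𝓡 n) 𝓘(ℝ, Fin (n + 2) → ℝ) (⊤ : ℕ∞) x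
  smooth_y : ContMDiff (𝓡 n) 𝓘(ℝ, Fin (n + 2) → ℝ) (⊤ : ℕ∞) y
  x_null : ∀ p, mink n (x p) (x p) = 0
  x_upper : ∀ p, 0 < x p 0
  y_null : ∀ p, mink n (y p) (y p) = 0
  y_lower : ∀ p, y p 0 < 0
  pairing : ∀ p, mink n (x p) (y p) = 1
  dx_y : ∀ p (v : TangentSpace (𝓡 n) p),
    mink n (mfderiv (𝓡 n) 𝓘(ℝ, Fin (n + 2) → ℝ) x p v) (y p) = 0
  dy_x : ∀ p (v : TangentSpace (𝓡 n) p),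
    mink n (mfderiv (𝓡 n) 𝓘(ℝ, Fin (n + 2) → ℝ) y p v) (x p) = 0

def minkBilin (n : ℕ) : (Fin (n + 2) → ℝ) →L[ℝ] (Fin (n + 2) → ℝ) →L[ℝ] ℝ :=
  ∑ i : Fin (n + 2), (if i = 0 then (-1 : ℝ) else 1) •
    (ContinuousLinearMap.proj i).smulRight (ContinuousLinearMap.proj i)

@[simp]
lemma minkBilin_apply (n : ℕ) (z w : Fin (n + 2) → ℝ) : minkBilin n z w = mink n z w := by
  simp only [minkBilin, mink, sum_apply, smul_apply, ContinuousLinearMap.smulRight_apply,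
    ContinuousLinearMap.proj_apply, smul_eq_mul, mul_assoc]

lemma mink_comm (n : ℕ) (z w : Fin (n + 2) → ℝ) : mink n z w = mink n w z :=
  Finset.sum_congr rfl fun _ _ => by ring

lemma mink_smul_left (n : ℕ) (c : ℝ) (z w : Fin (n + 2) → ℝ) :
    mink n (c • z) w = c * mink n z w := by
  simp [← minkBilin_apply]

lemma mink_zero_left (n : ℕ) (w : Fin (n + 2) → ℝ) : mink n 0 w = 0 := by
  simp [← minkBilin_apply]

lemma eq_zero_of_mink_self_eq_zero_of_apply_zero {n : ℕ} {w : Fin (n + 2) → ℝ} (hw : w 0 = 0)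
    (h : mink n w w = 0) : w = 0 := by
  have hsq : mink n w w = ∑ i, w i ^ 2 :=
    Finset.sum_congr rfl fun i _ => by by_cases hi : i = 0 <;> simp [hi, hw, sq]
  rw [hsq, Finset.sum_eq_zero_iff_of_nonneg fun i _ => sq_nonneg (w i)] at h
  exact funext fun i => pow_eq_zero_iff two_ne_zero |>.1 (h i (Finset.mem_univ i))

lemma eq_smul_of_mink_self_eq_zero {n : ℕ} {x z : Fin (n + 2) → ℝ} (hx : mink n x x = 0)
    (hx0 : x 0 ≠ 0) (hzx : mink n z x = 0) (hz : mink n z z = 0) : z = (z 0 / x 0) • x := by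
  -- `w` is lightlike with `w⁰ = 0`, and the form is positive definite on `{w⁰ = 0}`.
  set w := x 0 • z - z 0 • x
  have hw0 : w 0 = 0 := by simp [w, mul_comm]
  have hww : mink n w w = 0 := by
    simp only [w, ← minkBilin_apply, map_sub, map_smul, sub_apply, smul_apply, smul_eq_mul]
    simp only [minkBilin_apply, mink_comm n x z, hx, hz, hzx]
    ring
  rw [div_eq_inv_mul, mul_smul, eq_inv_smul_iff₀ hx0]
  exact sub_eq_zero.1 (eq_zero_of_mink_self_eq_zero_of_apply_zero hw0 hww)

lemma eq_zero_of_eq_smul_of_mink_eq_zero {n : ℕ} {x y z : Fin (n + 2) → ℝ} {c : ℝ}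
    (hxy : mink n x y = 1) (hz : z = c • x) (hzy : mink n z y = 0) : z = 0 := by
  rw [hz, mink_smul_left, hxy, mul_one] at hzy
  rw [hz, hzy, zero_smul]

def sliceProjDeriv {n : ℕ} (a : Fin (n + 2) → ℝ) : (Fin (n + 2) → ℝ) →L[ℝ] Fin (n + 2) → ℝ :=
  (a 0)⁻¹ • (ContinuousLinearMap.id ℝ _ - (a 0)⁻¹ • (ContinuousLinearMap.proj 0).smulRight a)

lemma sliceProjDeriv_apply {n : ℕ} (a u : Fin (n + 2) → ℝ) :
    sliceProjDeriv a u = (a 0)⁻¹ • (u - (u 0 / a 0) • a) := by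
  simp [sliceProjDeriv, div_eq_inv_mul, mul_smul]

lemma hasFDerivAt_inv_apply_zero_smul {n : ℕ} {a : Fin (n + 2) → ℝ} (ha : a 0 ≠ 0) :
    HasFDerivAt (fun z : Fin (n + 2) → ℝ => (z 0)⁻¹ • z) (sliceProjDeriv a) a := by
  refine (((hasDerivAt_inv ha).comp_hasFDerivAt a (hasFDerivAt_apply (𝕜 := ℝ) 0 a)).smul
    (hasFDerivAt_id a)).congr_fderiv ?_
  ext u i
  simp only [Function.comp_apply, neg_smul, id_eq, add_apply, smul_apply,
    ContinuousLinearMap.id_apply, ContinuousLinearMap.smulRight_apply, neg_apply,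
    ContinuousLinearMap.proj_apply, smul_eq_mul, Pi.add_apply, Pi.smul_apply, Pi.neg_apply,
    sliceProjDeriv_apply, Pi.sub_apply]
  field_simp
  ring

lemma sliceProjDeriv_apply_eq_zero_iff {n : ℕ} {a : Fin (n + 2) → ℝ} (ha : a 0 ≠ 0)
    (u : Fin (n + 2) → ℝ) : sliceProjDeriv a u = 0 ↔ u = (u 0 / a 0) • a := by
  simp [sliceProjDeriv_apply, ha, sub_eq_zero]

lemma HasFDerivAt.mfderiv_comp {𝕜 : Type*} [NontriviallyNormedField 𝕜]
    {E : Type*} [NormedAddCommGroup E] [NormedSpace 𝕜 E] {H : Type*} [TopologicalSpace H]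
    {I : ModelWithCorners 𝕜 E H} {M : Type*} [TopologicalSpace M] [ChartedSpace H M]
    {F : Type*} [NormedAddCommGroup F] [NormedSpace 𝕜 F]
    {G : Type*} [NormedAddCommGroup G] [NormedSpace 𝕜 G] {φ : F → G} {φ' : F →L[𝕜] G}
    {f : M → F} {p : M}
    (hφ : HasFDerivAt φ φ' (f p)) (hf : MDifferentiableAt I 𝓘(𝕜, F) f p) :
    mfderiv I 𝓘(𝕜, G) (φ ∘ f) p = φ'.comp (mfderiv I 𝓘(𝕜, F) f p) :=
  (hφ.hasMFDerivAt.comp p hf.hasMFDerivAt).mfderiv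

lemma mink_mfderiv_apply_self_eq_zero {E : Type*} [NormedAddCommGroup E] [NormedSpace ℝ E]
    {H : Type*} [TopologicalSpace H] {I : ModelWithCorners ℝ E H}
    {M : Type*} [TopologicalSpace M] [ChartedSpace H M] {n : ℕ} {f : M → Fin (n + 2) → ℝ}
    {c : ℝ} {p : M} (hc : ∀ q, mink n (f q) (f q) = c)
    (hf : MDifferentiableAt I 𝓘(ℝ, Fin (n + 2) → ℝ) f p) (v : TangentSpace I p) :
    mink n (mfderiv I 𝓘(ℝ, Fin (n + 2) → ℝ) f p v) (f p) = 0 := by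
  have h := ((minkBilin n).hasFDerivAt_of_bilinear (hasFDerivAt_id (f p))
    (hasFDerivAt_id (f p))).mfderiv_comp hf
  have hconst : (fun z => minkBilin n (id z) (id z)) ∘ f = fun _ => c :=
    funext fun q => by simpa using hc q
  rw [hconst, mfderiv_const] at h
  have hv : 0 = minkBilin n (f p) (mfderiv I _ f p v) + minkBilin n (mfderiv I _ f p v) (f p) :=
    DFunLike.congr_fun h v
  obtain ⟨u, hu⟩ : ∃ u : Fin (n + 2) → ℝ, mfderiv I 𝓘(ℝ, Fin (n + 2) → ℝ) f p v = u := ⟨_, rfl⟩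
  rw [hu, minkBilin_apply, minkBilin_apply, mink_comm n (f p)] at hv
  rw [hu]
  linarith

lemma forall_mink_imp_eq_zero_iff_injective {V : Type*} [AddCommGroup V] [Module ℝ V]
    [TopologicalSpace V] {n : ℕ} (D : V →L[ℝ] (Fin (n + 2) → ℝ))
    (hD : ∀ v, mink n (D v) (D v) = 0 → D v = 0) :
    (∀ v, (∀ w, mink n (D v) (D w) = 0) → v = 0) ↔ Function.Injective D := by
  rw [injective_iff_map_eq_zero]
  exact ⟨fun h v hv => h v fun w => by rw [hv, mink_zero_left], fun h v hv => h v (hD v (hv v))⟩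

lemma ContinuousLinearMap.injective_comp_iff {R : Type*} [Semiring R] {V W U : Type*}
    [TopologicalSpace V] [AddCommGroup V] [Module R V]
    [TopologicalSpace W] [AddCommGroup W] [Module R W]
    [TopologicalSpace U] [AddCommGroup U] [Module R U]
    (L : W →L[R] U) (D : V →L[R] W) (h : ∀ v, L (D v) = 0 → D v = 0) :
    Function.Injective (L.comp D) ↔ Function.Injective D := by
  simp only [injective_iff_map_eq_zero, ContinuousLinearMap.comp_apply]
  exact ⟨fun hLD v hv => hLD v (by rw [hv, map_zero]), fun hD v hv => hD v (h v hv)⟩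

theorem statement4_general (n : ℕ) {M : Type*} [TopologicalSpace M]
    [ChartedSpace (EuclideanSpace ℝ (Fin n)) M] [IsManifold (𝓡 n) (⊤ : ℕ∞) M]
    (x y : M → Fin (n + 2) → ℝ) (hxy : IsSpacelikeFrontalPair n x y) (p : M) :
    ((∀ v : TangentSpace (𝓡 n) p,
        (∀ w : TangentSpace (𝓡 n) p,
          mink n (mfderiv (𝓡 n) 𝓘(ℝ, Fin (n + 2) → ℝ) x p v)
            (mfderiv (𝓡 n) 𝓘(ℝ, Fin (n + 2) → ℝ) x p w) = 0) → v = 0) ↔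
      Function.Injective
        (mfderiv (𝓡 n) 𝓘(ℝ, Fin (n + 2) → ℝ) (fun q => (x q 0)⁻¹ • x q) p)) ∧
    ((∀ v : TangentSpace (𝓡 n) p,
        (∀ w : TangentSpace (𝓡 n) p,
          mink n (mfderiv (𝓡 n) 𝓘(ℝ, Fin (n + 2) → ℝ) x p v)
            (mfderiv (𝓡 n) 𝓘(ℝ, Fin (n + 2) → ℝ) x p w) = 0) → v = 0) →
      Function.Injective (mfderiv (𝓡 n) 𝓘(ℝ, Fin (n + 2) → ℝ) x p)) := by
  have hx0 : x p 0 ≠ 0 := (hxy.x_upper p).ne'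
  have hx : MDifferentiableAt (𝓡 n) 𝓘(ℝ, Fin (n + 2) → ℝ) x p :=
    hxy.smooth_x.mdifferentiableAt (by simp)
  set D := mfderiv (𝓡 n) 𝓘(ℝ, Fin (n + 2) → ℝ) x p
  have hD_prop : ∀ v c, D v = c • x p → D v = 0 := fun v _ h =>
    eq_zero_of_eq_smul_of_mink_eq_zero (hxy.pairing p) h (hxy.dx_y p v)
  have hD_null : ∀ v, mink n (D v) (D v) = 0 → D v = 0 := fun v hv =>
    hD_prop v _ <| eq_smul_of_mink_self_eq_zero (hxy.x_null p) hx0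
      (mink_mfderiv_apply_self_eq_zero hxy.x_null hx v) hv
  have hG : mfderiv (𝓡 n) 𝓘(ℝ, Fin (n + 2) → ℝ) (fun q => (x q 0)⁻¹ • x q) p =
      (sliceProjDeriv (x p)).comp D :=
    (hasFDerivAt_inv_apply_zero_smul hx0).mfderiv_comp hx
  have hnondeg := forall_mink_imp_eq_zero_iff_injective D hD_null
  refine ⟨hnondeg.trans ?_, hnondeg.1⟩
  rw [hG]
  exact (ContinuousLinearMap.injective_comp_iff (sliceProjDeriv (x p)) D fun v hv =>
    hD_prop v _ ((sliceProjDeriv_apply_eq_zero_iff hx0 _).1 hv)).symm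

/-- Lemma on the Gauss map: for a spacelike frontal `x : Mⁿ → Q^{n+1}_+`
(`n ≥ 1`), the first fundamental form `⟨dx,dx⟩` is non-degenerate at `p` if and only if the
Gauss map `G₊ = Π₊ ∘ x` (i.e. `p ↦ x p / x p 0`, the projection to the slice `{z⁰ = 1}`)
is an immersion at `p`; in particular, where `⟨dx,dx⟩` is non-degenerate, `x` itself is an
immersion. -/
theorem statement4 (n : ℕ) (hn : 1 ≤ n) {M : Type*} [TopologicalSpace M]
    [ChartedSpace (EuclideanSpace ℝ (Fin n)) M] [IsManifold (𝓡 n) (⊤ : ℕ∞) M]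
    (x y : M → Fin (n + 2) → ℝ) (hxy : IsSpacelikeFrontalPair n x y) (p : M) :
    ((∀ v : TangentSpace (𝓡 n) p,
        (∀ w : TangentSpace (𝓡 n) p,
          mink n (mfderiv (𝓡 n) 𝓘(ℝ, Fin (n + 2) → ℝ) x p v)
            (mfderiv (𝓡 n) 𝓘(ℝ, Fin (n + 2) → ℝ) x p w) = 0) → v = 0) ↔
      Function.Injective
        (mfderiv (𝓡 n) 𝓘(ℝ, Fin (n + 2) → ℝ) (fun q => (x q 0)⁻¹ • x q) p)) ∧
    ((∀ v : TangentSpace (𝓡 n) p,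
        (∀ w : TangentSpace (𝓡 n) p,
          mink n (mfderiv (𝓡 n) 𝓘(ℝ, Fin (n + 2) → ℝ) x p v)
            (mfderiv (𝓡 n) 𝓘(ℝ, Fin (n + 2) → ℝ) x p w) = 0) → v = 0) →
      Function.Injective (mfderiv (𝓡 n) 𝓘(ℝ, Fin (n + 2) → ℝ) x p)) :=
  statement4_general n x y hxy p
end
end

section
/- Let (M^n, E, ⟨,⟩, D, ξ, ζ) (n ≥ 2) be a frontal bundle satisfying the Gauss equation ⟨R^D(X,Y)v, w⟩ = det[⟨ξ(Y),v⟩, ⟨ξ(Y),w⟩; ⟨ζ(X),v⟩, ⟨ζ(X),w⟩] + det[⟨ζ(Y),v⟩, ⟨ζ(Y),w⟩; ⟨ξ(X),v⟩, ⟨ξ(X),w⟩]. Then on the regular set of ξ, with g = ξ*⟨,⟩ and II the second fundamental form, the Ricci tensor and scalar curvature of g satisfy Ric_g = −Trace_g(II)·g − (n−2)·II and S_g = −2(n−1)·Trace_g(II). In particular, for n = 2 (i.e. for a spacelike surface in Q³₊ with induced metric g and second fundamental form II = −⟨dx,dy⟩), the Gaussian curvature satisfies K = −Trace_g(II) = −2H,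 where H = (1/2)Trace_g(II) is the mean curvature. -/
noncomputable section

namespace Loc

open Matrix

variable {n : ℕ}

/-- Points of the local coordinate chart `ℝⁿ`. -/
abbrev Pt (n : ℕ) := Fin n → ℝ

/-- `n × n` real matrices. -/
abbrev Mat (n : ℕ) := Matrix (Fin n) (Fin n) ℝ

/-- `i`-th partial derivative of a scalar function on `ℝⁿ`. -/
def pd (i : Fin n) (f : Pt n → ℝ) (p : Pt n) : ℝ :=
  fderiv ℝ f p (Pi.single i 1)

/-- Christoffel symbols `Γ^k_{ij}` of a metric `g` (as a matrix-valued function). -/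
def christoffel (g : Pt n → Mat n) (k i j : Fin n) (p : Pt n) : ℝ :=
  (1 / 2) * ∑ l, (g p)⁻¹ k l *
    (pd i (fun q => g q j l) p + pd j (fun q => g q i l) p - pd l (fun q => g q i j) p)

/-- Curvature tensor `R^l{}_{kij}` of `g`, i.e. `R(∂ᵢ,∂ⱼ)∂ₖ = Σ_l riemann g l i j k • ∂_l`. -/
def riemann (g : Pt n → Mat n) (l i j k : Fin n) (p : Pt n) : ℝ :=
  pd i (christoffel g l j k) p - pd j (christoffel g l i k) p
    + ∑ m, (christoffel g l i m p * christoffel g m j k p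
      - christoffel g l j m p * christoffel g m i k p)

/-- Ricci tensor `R_{jk}` of `g`. -/
def ricci (g : Pt n → Mat n) (j k : Fin n) (p : Pt n) : ℝ :=
  ∑ i, riemann g i i j k p

/-- Scalar curvature `S_g`. -/
def scalarCurv (g : Pt n → Mat n) (p : Pt n) : ℝ :=
  ∑ j, ∑ k, (g p)⁻¹ j k * ricci g j k p

/-- The Schouten tensor `A = (1/(n-2)) (Ric - S_g/(2(n-1)) g)` of `g`. -/
def schouten (g : Pt n → Mat n) (p : Pt n) : Mat n :=
  (1 / (n - 2 : ℝ)) •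
    Matrix.of (fun i j => ricci g i j p - scalarCurv g p / (2 * (n - 1 : ℝ)) * g p i j)

/-- `g` is flat (vanishing curvature, hence vanishing sectional curvature) on `s`. -/
def FlatOn (g : Pt n → Mat n) (s : Set (Pt n)) : Prop :=
  ∀ p ∈ s, ∀ l i j k, riemann g l i j k p = 0

/-- `g` is conformally flat on `s`: around each point of `s` some conformal multiple
`e^{2σ} g` has vanishing curvature. -/
def ConformallyFlatOn (g : Pt n → Mat n) (s : Set (Pt n)) : Prop :=
  ∀ p ∈ s, ∃ V : Set (Pt n), IsOpen V ∧ p ∈ V ∧ V ⊆ s ∧ ∃ σ : Pt n → ℝ,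
    ContDiffOn ℝ (⊤ : ℕ∞) σ V ∧ FlatOn (fun q => Real.exp (2 * σ q) • g q) V

/-- A coherent tangent bundle over a coordinate domain `U ⊆ ℝⁿ`, in the trivialization
`e₁,…,e_n` of the rank-`n` bundle `E`: `h` is the fiber metric `⟨e_a,e_b⟩`, `ω` are the
connection coefficients (`D_{∂ᵢ} e_b = Σ_a (ω i) a b • e_a`) and `φ` is the bundle
homomorphism (`φ(∂_j) = Σ_a φ a j • e_a`). -/
structure CTB (n : ℕ) where
  U : Set (Pt n)
  h : Pt n → Mat n
  ω : Fin n → Pt n → Mat n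
  φ : Pt n → Mat n

namespace CTB

/-- `f` is a smooth bundle homomorphism `TM → E` satisfying the coherence condition
`D_X f(Y) - D_Y f(X) - f([X,Y]) = 0`. -/
def IsCoherentHom (d : CTB n) (f : Pt n → Mat n) : Prop :=
  (∀ a j, ContDiffOn ℝ (⊤ : ℕ∞) (fun p => f p a j) d.U) ∧
  ∀ p ∈ d.U, ∀ a i j,
    pd i (fun q => f q a j) p + ∑ b, d.ω i p a b * f p b j
      = pd j (fun q => f q a i) p + ∑ b, d.ω j p a b * f p b i

/-- The axioms of a coherent tangent bundle: `U` open, `h` a smooth fiber metric,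
`ω` a smooth metric connection, and `φ` a coherent smooth bundle homomorphism. -/
def IsCTB (d : CTB n) : Prop :=
  IsOpen d.U ∧
  (∀ a b, ContDiffOn ℝ (⊤ : ℕ∞) (fun p => d.h p a b) d.U) ∧
  (∀ p ∈ d.U, (d.h p).IsSymm ∧ (d.h p).PosDef) ∧
  (∀ i a b, ContDiffOn ℝ (⊤ : ℕ∞) (fun p => d.ω i p a b) d.U) ∧
  (∀ p ∈ d.U, ∀ i a b,
    pd i (fun q => d.h q a b) p
      = (∑ c, d.ω i p c a * d.h p c b) + ∑ c, d.ω i p c b * d.h p a c) ∧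
  d.IsCoherentHom d.φ

/-- The pull-back metric `g = φ*⟨,⟩`, i.e. `g_{ij} = ⟨φ(∂ᵢ), φ(∂ⱼ)⟩`. -/
def gmet (d : CTB n) : Pt n → Mat n := fun p => (d.φ p)ᵀ * d.h p * d.φ p

/-- The regular set of `φ` (points of `U` where `φ` is injective). -/
def reg (d : CTB n) : Set (Pt n) := {p | p ∈ d.U ∧ (d.φ p).det ≠ 0}

/-- A generalized conformally flat manifold: a coherent tangent bundle with `n ≥ 3`,
dense regular set, and conformally flat pull-back metric on the regular set. -/
def IsGCF (d : CTB n) : Prop :=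
  3 ≤ n ∧ d.IsCTB ∧ d.U ⊆ closure d.reg ∧ ConformallyFlatOn d.gmet d.reg

/-- The Schouten tensor of the pull-back metric. -/
def schoutenT (d : CTB n) : Pt n → Mat n := fun p => schouten d.gmet p

/-- The set `R*` of non-parabolic regular points (where the Schouten tensor is
non-degenerate). -/
def regStar (d : CTB n) : Set (Pt n) := {p | p ∈ d.reg ∧ (d.schoutenT p).det ≠ 0}

/-- The dual metric `ǧ_{ij} = Σ_{a,b} A_{ia} A_{jb} g^{ab}` (in matrix form `A g⁻¹ A`,
using the symmetry of `A` and `g`). -/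
def dualMet (d : CTB n) : Pt n → Mat n :=
  fun p => d.schoutenT p * (d.gmet p)⁻¹ * d.schoutenT p

/-- The tensor `Â = Σ g^{ia} A_{aj} ∂ᵢ ⊗ du^j`, i.e. `g⁻¹ A` in matrix form. -/
def Ahat (d : CTB n) : Pt n → Mat n := fun p => (d.gmet p)⁻¹ * d.schoutenT p

/-- `ψ` is a smooth bundle homomorphism extending `φ ∘ Â` (defined on the regular set)
to all of `U`. -/
def IsDualHom (d : CTB n) (ψ : Pt n → Mat n) : Prop :=
  (∀ a j, ContDiffOn ℝ (⊤ : ℕ∞) (fun p => ψ p a j) d.U) ∧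
  ∀ p ∈ d.reg, ψ p = d.φ p * d.Ahat p

/-- An admissible GCF-manifold: `R*` is dense and `φ ∘ Â` extends smoothly to `U`. -/
def IsAdmissible (d : CTB n) : Prop :=
  d.IsGCF ∧ d.U ⊆ closure d.regStar ∧ ∃ ψ, d.IsDualHom ψ

end CTB

end Loc

namespace Loc

open Matrix

/-- `i`-th partial derivative of a vector-valued map on `ℝⁿ`. -/
def pdv {n m : ℕ} (i : Fin n) (f : Pt n → (Fin m → ℝ)) (p : Pt n) : Fin m → ℝ :=
  fderiv ℝ f p (Pi.single i 1)

/-- A frontal bundle over a coordinate domain `U ⊆ ℝⁿ`: a rank-`n` bundle (trivialized,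
with fiber metric `h` and connection coefficients `ω`) together with two bundle
homomorphisms `ξ` and `ζ`. -/
structure FB (n : ℕ) where
  U : Set (Pt n)
  h : Pt n → Mat n
  ω : Fin n → Pt n → Mat n
  ξ : Pt n → Mat n
  ζ : Pt n → Mat n

namespace FB

variable {n : ℕ}

/-- The coherent tangent bundle with first homomorphism `ξ`. -/
def ctb1 (d : FB n) : CTB n := ⟨d.U, d.h, d.ω, d.ξ⟩

/-- The coherent tangent bundle with second homomorphism `ζ`. -/
def ctb2 (d : FB n) : CTB n := ⟨d.U, d.h, d.ω, d.ζ⟩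

/-- The frontal bundle axioms: both `(U,h,ω,ξ)` and `(U,h,ω,ζ)` are coherent tangent
bundles, and the compatibility `⟨ξ(X),ζ(Y)⟩ = ⟨ξ(Y),ζ(X)⟩` holds. -/
def IsFB (d : FB n) : Prop :=
  d.ctb1.IsCTB ∧ d.ctb2.IsCTB ∧ ∀ p ∈ d.U, ((d.ξ p)ᵀ * d.h p * d.ζ p).IsSymm

/-- First fundamental form `I(∂ᵢ,∂ⱼ) = ⟨ξ∂ᵢ, ξ∂ⱼ⟩`. -/
def FF1 (d : FB n) : Pt n → Mat n := fun p => (d.ξ p)ᵀ * d.h p * d.ξ p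

/-- Second fundamental form `II(∂ᵢ,∂ⱼ) = -⟨ξ∂ᵢ, ζ∂ⱼ⟩`. -/
def FF2 (d : FB n) : Pt n → Mat n := fun p => -((d.ξ p)ᵀ * d.h p * d.ζ p)

/-- Third fundamental form `III(∂ᵢ,∂ⱼ) = ⟨ζ∂ᵢ, ζ∂ⱼ⟩`. -/
def FF3 (d : FB n) : Pt n → Mat n := fun p => (d.ζ p)ᵀ * d.h p * d.ζ p

/-- Curvature `R^D` of the connection `D`:
`R^D(∂ᵢ,∂ⱼ) e_b = Σ_a (curv i j p) a b • e_a`. -/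
def curv (d : FB n) (i j : Fin n) (p : Pt n) : Mat n :=
  Matrix.of fun a b =>
    pd i (fun q => d.ω j q a b) p - pd j (fun q => d.ω i q a b) p
      + ∑ c, (d.ω i p a c * d.ω j p c b - d.ω j p a c * d.ω i p c b)

/-- The Gauss equation (for curvature `c = -1` split into the lightcone form):
`⟨R^D(X,Y)v,w⟩ = det(⟨ξY,v⟩,⟨ξY,w⟩;⟨ζX,v⟩,⟨ζX,w⟩) + det(⟨ζY,v⟩,⟨ζY,w⟩;⟨ξX,v⟩,⟨ξX,w⟩)`,
written out on the coordinate fields `X = ∂ᵢ, Y = ∂ⱼ` and frame sections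
`v = e_c, w = e_{c'}` (which suffices, both sides being tensorial). -/
def GaussEq (d : FB n) : Prop :=
  ∀ p ∈ d.U, ∀ i j c c' : Fin n,
    (∑ a, d.curv i j p a c * d.h p a c') =
      (((d.ξ p)ᵀ * d.h p) j c * ((d.ζ p)ᵀ * d.h p) i c'
        - ((d.ξ p)ᵀ * d.h p) j c' * ((d.ζ p)ᵀ * d.h p) i c)
      + (((d.ζ p)ᵀ * d.h p) j c * ((d.ξ p)ᵀ * d.h p) i c'
        - ((d.ζ p)ᵀ * d.h p) j c' * ((d.ξ p)ᵀ * d.h p) i c)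

end FB

/-- `x : U → Q^{n+1}_+` is a spacelike frontal with dual `y : U → Q^{n+1}_-`. -/
def IsSpacelikeFrontalOn (n : ℕ) (x y : Pt n → (Fin (n + 2) → ℝ)) (U : Set (Pt n)) :
    Prop :=
  ContDiffOn ℝ (⊤ : ℕ∞) x U ∧ ContDiffOn ℝ (⊤ : ℕ∞) y U ∧
  ∀ p ∈ U, mink n (x p) (x p) = 0 ∧ 0 < x p 0 ∧
    mink n (y p) (y p) = 0 ∧ y p 0 < 0 ∧ mink n (x p) (y p) = 1 ∧
    ∀ i, mink n (pdv i x p) (y p) = 0 ∧ mink n (pdv i y p) (x p) = 0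

end Loc

open Loc

namespace Loc

open Matrix Filter

variable {n : ℕ} {p : Pt n} {f g : Pt n → ℝ} {i j : Fin n}

lemma pd_congr (h : f =ᶠ[nhds p] g) (i : Fin n) : pd i f p = pd i g p := by
  unfold pd; rw [h.fderiv_eq]

lemma pd_add (hf : DifferentiableAt ℝ f p) (hg : DifferentiableAt ℝ g p) :
    pd i (fun q => f q + g q) p = pd i f p + pd i g p := by
  unfold pd; rw [fderiv_fun_add hf hg]; rfl

lemma pd_mul (hf : DifferentiableAt ℝ f p) (hg : DifferentiableAt ℝ g p) :
    pd i (fun q => f q * g q) p = f p * pd i g p + g p * pd i f p := by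
  unfold pd; rw [fderiv_fun_mul hf hg]; rfl

lemma pd_sum {s : Finset (Fin n)} {F : Fin n → Pt n → ℝ}
    (hf : ∀ b ∈ s, DifferentiableAt ℝ (F b) p) :
    pd i (fun q => ∑ b ∈ s, F b q) p = ∑ b ∈ s, pd i (F b) p := by
  unfold pd; rw [fderiv_fun_sum hf]; simp

lemma contDiffAt_pd (hf : ContDiffAt ℝ (⊤ : ℕ∞) f p) (i : Fin n) :
    ContDiffAt ℝ (⊤ : ℕ∞) (fun q => pd i f q) p := by
  have h1 : ContDiffAt ℝ (⊤ : ℕ∞) (fderiv ℝ f) p := hf.fderiv_right (by simp)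
  exact h1.clm_apply contDiffAt_const

lemma pd_comm (hf : ContDiffAt ℝ (⊤ : ℕ∞) f p) (i j : Fin n) :
    pd i (fun q => pd j f q) p = pd j (fun q => pd i f q) p := by
  have hd : DifferentiableAt ℝ (fderiv ℝ f) p :=
    (hf.fderiv_right (m := 1) (WithTop.coe_le_coe.mpr le_top)).differentiableAt (by simp)
  have key : ∀ a b : Fin n, pd a (fun q => pd b f q) p
      = fderiv ℝ (fderiv ℝ f) p (Pi.single a 1) (Pi.single b 1) := by
    intro a b
    unfold pd
    rw [fderiv_clm_apply hd (differentiableAt_const _)]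
    simp
  rw [key i j, key j i]
  exact (hf.isSymmSndFDerivAt (by rw [minSmoothness_of_isRCLikeNormedField]; exact WithTop.coe_le_coe.mpr le_top)).eq _ _

end Loc
namespace Loc

open Matrix Filter

variable {n : ℕ} {p q : Pt n} {i j : Fin n}

/-- Entrywise differentiability of a matrix-valued function. -/
def Mdiff (M : Pt n → Mat n) (q : Pt n) : Prop :=
  ∀ a b, DifferentiableAt ℝ (fun r => M r a b) q

/-- Entrywise smoothness of a matrix-valued function. -/
def Msm (M : Pt n → Mat n) (q : Pt n) : Prop :=
  ∀ a b, ContDiffAt ℝ (⊤ : ℕ∞) (fun r => M r a b) q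

/-- Entrywise partial derivative of a matrix-valued function. -/
def dmat (i : Fin n) (M : Pt n → Mat n) (q : Pt n) : Mat n :=
  Matrix.of fun a b => pd i (fun r => M r a b) q

lemma Msm.mdiff {M : Pt n → Mat n} (h : Msm M q) : Mdiff M q :=
  fun a b => (h a b).differentiableAt (by simp)

lemma Msm.mul {A B : Pt n → Mat n} (hA : Msm A q) (hB : Msm B q) :
    Msm (fun r => A r * B r) q := by
  intro a b
  have : (fun r => (A r * B r) a b) = fun r => ∑ c, A r a c * B r c b := by
    funext r; simp [Matrix.mul_apply]
  rw [this]
  exact ContDiffAt.sum fun c _ => (hA a c).mul (hB c b)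

lemma Msm.neg {A : Pt n → Mat n} (hA : Msm A q) : Msm (fun r => -(A r)) q := by
  intro a b
  have : (fun r => (-(A r)) a b) = fun r => -(A r a b) := rfl
  rw [this]; exact (hA a b).neg

lemma Msm.dmat_smooth {A : Pt n → Mat n} (hA : Msm A q) (i : Fin n) :
    Msm (fun r => dmat i A r) q := by
  intro a b
  exact contDiffAt_pd (hA a b) i

lemma Mdiff.mul {A B : Pt n → Mat n} (hA : Mdiff A q) (hB : Mdiff B q) :
    Mdiff (fun r => A r * B r) q := by
  intro a b
  have : (fun r => (A r * B r) a b) = fun r => ∑ c, A r a c * B r c b := by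
    funext r; simp [Matrix.mul_apply]
  rw [this]
  exact DifferentiableAt.fun_sum fun c _ => (hA a c).fun_mul (hB c b)

lemma dmat_mul {A B : Pt n → Mat n} (hA : Mdiff A q) (hB : Mdiff B q) (i : Fin n) :
    dmat i (fun r => A r * B r) q = dmat i A q * B q + A q * dmat i B q := by
  ext a b
  have h1 : (fun r => (A r * B r) a b) = fun r => ∑ c, A r a c * B r c b := by
    funext r; simp [Matrix.mul_apply]
  simp only [dmat, Matrix.of_apply, h1, Matrix.add_apply, Matrix.mul_apply]
  rw [pd_sum (fun c _ => (hA a c).fun_mul (hB c b))]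
  rw [← Finset.sum_add_distrib]
  refine Finset.sum_congr rfl fun c _ => ?_
  rw [pd_mul (hA a c) (hB c b)]
  ring

lemma dmat_transpose {A : Pt n → Mat n} (i : Fin n) :
    dmat i (fun r => (A r)ᵀ) q = (dmat i A q)ᵀ := by
  ext a b; simp [dmat]

lemma dmat_congr {A B : Pt n → Mat n} (h : ∀ᶠ r in nhds q, A r = B r) (i : Fin n) :
    dmat i A q = dmat i B q := by
  ext a b
  exact pd_congr (h.mono fun r hr => by rw [hr]) i

/-- Smoothness of the determinant of a matrix-valued map with smooth entries. -/
lemma Msm.det {M : Pt n → Mat n} (hM : Msm M q) :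
    ContDiffAt ℝ (⊤ : ℕ∞) (fun r => (M r).det) q := by
  have : (fun r => (M r).det)
      = fun r => ∑ σ : Equiv.Perm (Fin n), Equiv.Perm.sign σ • ∏ a, M r (σ a) a := by
    funext r; rw [Matrix.det_apply]
  rw [this]
  refine ContDiffAt.sum fun σ _ => ?_
  have hprod : ContDiffAt ℝ (⊤ : ℕ∞) (fun r => ∏ a, M r (σ a) a) q := by
    classical
    have : ∀ s : Finset (Fin n), ContDiffAt ℝ (⊤ : ℕ∞) (fun r => ∏ a ∈ s, M r (σ a) a) q := by
      intro s
      induction s using Finset.induction_on with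
      | empty => simpa using contDiffAt_const (c := (1 : ℝ))
      | insert a s' hnotmem ih =>
        simpa [Finset.prod_insert hnotmem] using (hM (σ a) a).mul ih
    exact this Finset.univ
  have : (fun r => Equiv.Perm.sign σ • ∏ a, M r (σ a) a)
      = fun r => ((Equiv.Perm.sign σ : ℤ) : ℝ) * ∏ a, M r (σ a) a := by
    funext r
    rw [Units.smul_def, zsmul_eq_mul]
  rw [this]
  exact (contDiffAt_const).mul hprod

/-- Smoothness of the inverse of a matrix-valued map at a point of invertibility. -/
lemma Msm.inv {M : Pt n → Mat n} (hM : Msm M q) (hdet : (M q).det ≠ 0) :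
    Msm (fun r => (M r)⁻¹) q := by
  intro a b
  have hadj : ContDiffAt ℝ (⊤ : ℕ∞) (fun r => (M r).adjugate a b) q := by
    have : (fun r => (M r).adjugate a b)
        = fun r => ((M r).updateRow b (Pi.single a 1)).det := by
      funext r; rw [Matrix.adjugate_apply]
    rw [this]
    refine Msm.det ?_
    intro a' b'
    by_cases hc : a' = b
    · subst hc
      simpa [Matrix.updateRow_apply] using contDiffAt_const (c := (Pi.single a 1 : Fin n → ℝ) b')
    · simpa [Matrix.updateRow_apply, hc] using hM a' b'
  have : (fun r => (M r)⁻¹ a b) = fun r => ((M r).det)⁻¹ * (M r).adjugate a b := by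
    funext r
    rw [Matrix.inv_def]
    simp [Ring.inverse_eq_inv']
  rw [this]
  exact ((hM.det).inv hdet).mul hadj

end Loc
namespace Loc

open Matrix Filter

variable {n : ℕ}

/-- The covariant derivative matrix `P_i = ∂_i φ + ω_i φ`. -/
def Pm (d : CTB n) (i : Fin n) (q : Pt n) : Mat n :=
  dmat i (fun r => d.φ r) q + d.ω i q * d.φ q

set_option linter.unusedSectionVars false

namespace CTB

variable {d : CTB n} (hd : d.IsCTB)

section Smooth
include hd
variable {q : Pt n} (hq : q ∈ d.U)
include hq

lemma msm_phi : Msm (fun r => d.φ r) q := fun a b =>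
  (hd.2.2.2.2.2.1 a b).contDiffAt (hd.1.mem_nhds hq)

lemma msm_h : Msm (fun r => d.h r) q := fun a b =>
  (hd.2.1 a b).contDiffAt (hd.1.mem_nhds hq)

lemma msm_omega (i : Fin n) : Msm (fun r => d.ω i r) q := fun a b =>
  (hd.2.2.2.1 i a b).contDiffAt (hd.1.mem_nhds hq)

lemma msm_Pm (i : Fin n) : Msm (fun r => Pm d i r) q := by
  intro a b
  have h1 : (fun r => Pm d i r a b)
      = fun r => pd i (fun s => d.φ s a b) r + ∑ c, d.ω i r a c * d.φ r c b := by
    funext r; simp [Pm, dmat, Matrix.mul_apply]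
  rw [h1]
  exact (contDiffAt_pd (msm_phi hd hq a b) i).add
    (ContDiffAt.sum fun c _ => ((msm_omega hd hq i) a c).mul (msm_phi hd hq c b))

lemma h_symm : (d.h q)ᵀ = d.h q := (hd.2.2.1 q hq).1

lemma h_det_ne : (d.h q).det ≠ 0 := (hd.2.2.1 q hq).2.det_pos.ne'

lemma dmat_h (i : Fin n) :
    dmat i (fun r => d.h r) q = (d.ω i q)ᵀ * d.h q + d.h q * d.ω i q := by
  ext a b
  simp only [dmat, Matrix.of_apply, Matrix.add_apply, Matrix.mul_apply,
    Matrix.transpose_apply]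
  rw [hd.2.2.2.2.1 q hq i a b]
  simp [mul_comm]

lemma Pm_symm (i j a : Fin n) : Pm d i q a j = Pm d j q a i := by
  simpa [Pm, dmat, Matrix.mul_apply] using hd.2.2.2.2.2.2 q hq a i j

lemma dmat_gmet (i : Fin n) :
    dmat i (fun r => d.gmet r) q
      = (Pm d i q)ᵀ * d.h q * d.φ q + (d.φ q)ᵀ * d.h q * Pm d i q := by
  have hφ := (msm_phi hd hq).mdiff
  have hh := (msm_h hd hq).mdiff
  have hφT : Mdiff (fun r => (d.φ r)ᵀ) q := fun a b => hφ b a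
  have e1 : dmat i (fun r => d.gmet r) q
      = dmat i (fun s => (d.φ s)ᵀ * d.h s) q * d.φ q
        + ((d.φ q)ᵀ * d.h q) * dmat i (fun r => d.φ r) q :=
    dmat_mul (A := fun s => (d.φ s)ᵀ * d.h s) (B := fun r => d.φ r) (hφT.mul hh) hφ i
  have e2 : dmat i (fun s => (d.φ s)ᵀ * d.h s) q
      = dmat i (fun s => (d.φ s)ᵀ) q * d.h q + (d.φ q)ᵀ * dmat i (fun s => d.h s) q :=
    dmat_mul (A := fun s => (d.φ s)ᵀ) (B := fun s => d.h s) hφT hh i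
  rw [e1, e2]
  have hdt : dmat i (fun r => (d.φ r)ᵀ) q = (dmat i (fun r => d.φ r) q)ᵀ :=
    dmat_transpose i
  rw [hdt, dmat_h hd hq i]
  have hPm : dmat i (fun r => d.φ r) q = Pm d i q - d.ω i q * d.φ q := by
    simp [Pm]
  rw [hPm]
  simp only [Matrix.transpose_sub, Matrix.transpose_mul, Matrix.sub_mul,
    Matrix.add_mul, Matrix.mul_add, Matrix.mul_sub, Matrix.mul_assoc]
  abel

end Smooth

section Reg

variable {p : Pt n} (hd : d.IsCTB) (hp : p ∈ d.reg)
include hd hp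

lemma phi_det_ne : (d.φ p).det ≠ 0 := hp.2

lemma reg_mem_nhds : d.reg ∈ nhds p := by
  have h1 : d.U ∈ nhds p := hd.1.mem_nhds hp.1
  have h2 : ∀ᶠ r in nhds p, (d.φ r).det ≠ 0 := by
    have hc : ContinuousAt (fun r => (d.φ r).det) p :=
      ((msm_phi hd hp.1).det).continuousAt
    exact hc.eventually_ne hp.2
  filter_upwards [h1, h2] with r hr1 hr2
  exact ⟨hr1, hr2⟩

lemma gmet_det_ne : (d.gmet p).det ≠ 0 := by
  have : (d.gmet p).det = ((d.φ p)ᵀ).det * (d.h p).det * (d.φ p).det := by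
    rw [show d.gmet p = (d.φ p)ᵀ * d.h p * d.φ p from rfl, Matrix.det_mul, Matrix.det_mul]
  rw [this, Matrix.det_transpose]
  exact mul_ne_zero (mul_ne_zero hp.2 (h_det_ne hd hp.1)) hp.2

lemma ginv_phiT_h : (d.gmet p)⁻¹ * ((d.φ p)ᵀ * d.h p) = (d.φ p)⁻¹ := by
  have hφ : IsUnit (d.φ p).det := (phi_det_ne hd hp).isUnit
  have hφT : IsUnit ((d.φ p)ᵀ).det := by rwa [Matrix.det_transpose]
  have hh : IsUnit (d.h p).det := (h_det_ne hd hp.1).isUnit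
  have : (d.gmet p)⁻¹ = (d.φ p)⁻¹ * ((d.h p)⁻¹ * ((d.φ p)ᵀ)⁻¹) := by
    show ((d.φ p)ᵀ * d.h p * d.φ p)⁻¹ = _
    rw [Matrix.mul_inv_rev, Matrix.mul_inv_rev]
  rw [this]
  rw [Matrix.mul_assoc, Matrix.mul_assoc]
  rw [← Matrix.mul_assoc ((d.φ p)ᵀ)⁻¹, Matrix.nonsing_inv_mul _ hφT, Matrix.one_mul,
    Matrix.nonsing_inv_mul _ hh, Matrix.mul_one]

lemma christoffel_eq (k i j : Fin n) :
    christoffel d.gmet k i j p = ((d.φ p)⁻¹ * Pm d i p) k j := by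
  classical
  have hU := hp.1
  set Y : Fin n → Mat n := fun m => (Pm d m p)ᵀ * (d.h p * d.φ p) with hY
  have hswap : ∀ l a b, Y l a b = Y a l b := by
    intro l a b
    simp only [hY, Matrix.mul_apply, Matrix.transpose_apply]
    exact Finset.sum_congr rfl fun c _ => by rw [Pm_symm hd hU l a c]
  have hpdg : ∀ m a b, pd m (fun r => d.gmet r a b) p = Y m a b + Y m b a := by
    intro m a b
    have h1 : pd m (fun r => d.gmet r a b) p = dmat m (fun r => d.gmet r) p a b := rfl
    rw [h1, dmat_gmet hd hU m]
    have h2 : (Pm d m p)ᵀ * d.h p * d.φ p = Y m := by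
      rw [hY, Matrix.mul_assoc]
    have h3 : (d.φ p)ᵀ * d.h p * Pm d m p = (Y m)ᵀ := by
      rw [hY, Matrix.transpose_mul, Matrix.transpose_transpose, Matrix.transpose_mul,
        h_symm hd hU, Matrix.mul_assoc]
    rw [h2, h3]
    simp [Matrix.add_apply, Matrix.transpose_apply]
  simp only [christoffel]
  have hsum : ∑ l, (d.gmet p)⁻¹ k l *
        (pd i (fun q => d.gmet q j l) p + pd j (fun q => d.gmet q i l) p
          - pd l (fun q => d.gmet q i j) p)
      = ∑ l, (d.gmet p)⁻¹ k l * (Y i j l + Y j i l) := by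
    refine Finset.sum_congr rfl fun l _ => ?_
    rw [hpdg i j l, hpdg j i l, hpdg l i j, hswap l i j, hswap l j i]
    ring
  rw [hsum]
  have hsplit : ∑ l, (d.gmet p)⁻¹ k l * (Y i j l + Y j i l)
      = ((d.gmet p)⁻¹ * (Y i)ᵀ) k j + ((d.gmet p)⁻¹ * (Y j)ᵀ) k i := by
    simp [Matrix.mul_apply, Matrix.transpose_apply, mul_add, Finset.sum_add_distrib]
  rw [hsplit]
  have hYT : ∀ m, (d.gmet p)⁻¹ * (Y m)ᵀ = (d.φ p)⁻¹ * Pm d m p := by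
    intro m
    rw [hY]
    rw [Matrix.transpose_mul, Matrix.transpose_transpose, Matrix.transpose_mul,
      h_symm hd hU, ← Matrix.mul_assoc, ← Matrix.mul_assoc, Matrix.mul_assoc ((d.gmet p)⁻¹),
      ginv_phiT_h hd hp]
  rw [hYT i, hYT j]
  have hlast : ((d.φ p)⁻¹ * Pm d j p) k i = ((d.φ p)⁻¹ * Pm d i p) k j := by
    simp only [Matrix.mul_apply]
    exact Finset.sum_congr rfl fun a _ => by rw [Pm_symm hd hU j i a]
  rw [hlast]
  ring

end Reg

end CTB

end Loc
namespace Loc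

open Matrix Filter

variable {n : ℕ}

lemma dmat_add {q : Pt n} {A B : Pt n → Mat n} (hA : Mdiff A q) (hB : Mdiff B q)
    (i : Fin n) :
    dmat i (fun r => A r + B r) q = dmat i A q + dmat i B q := by
  ext a b
  simpa [dmat] using pd_add (hA a b) (hB a b) (i := i)

/-- Connection curvature of a coherent tangent bundle. -/
def curvC (d : CTB n) (i j : Fin n) (p : Pt n) : Mat n :=
  dmat i (fun r => d.ω j r) p - dmat j (fun r => d.ω i r) p
    + (d.ω i p * d.ω j p - d.ω j p * d.ω i p)

namespace CTB

variable {d : CTB n} {p : Pt n} (hd : d.IsCTB) (hp : p ∈ d.reg)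
include hd hp

set_option linter.unusedSectionVars false

lemma phi_mul_riemann (i j : Fin n) :
    d.φ p * Matrix.of (fun l k => riemann d.gmet l i j k p)
      = curvC d i j p * d.φ p := by
  classical
  have hU := hp.1
  have hregn := reg_mem_nhds hd hp
  set Γ : Fin n → Pt n → Mat n := fun m q => (d.φ q)⁻¹ * Pm d m q with hΓ
  have hsmφinv : Msm (fun r => (d.φ r)⁻¹) p := (msm_phi hd hU).inv hp.2
  have hsmΓ : ∀ m, Msm (Γ m) p := fun m => Msm.mul hsmφinv (msm_Pm hd hU m)
  have hchr : ∀ᶠ q in nhds p, ∀ l m k', christoffel d.gmet l m k' q = Γ m q l k' := by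
    filter_upwards [hregn] with q hq
    intro l m k'
    exact christoffel_eq hd hq l m k'
  have hphiΓ : ∀ᶠ q in nhds p, ∀ m, d.φ q * Γ m q = Pm d m q := by
    filter_upwards [hregn] with q hq
    intro m
    rw [hΓ, ← Matrix.mul_assoc, Matrix.mul_nonsing_inv _ hq.2.isUnit, Matrix.one_mul]
  have hphiΓp : ∀ m, d.φ p * Γ m p = Pm d m p := hphiΓ.self_of_nhds
  -- step (e): the Riemann matrix in terms of Γ
  have he : Matrix.of (fun l k => riemann d.gmet l i j k p)
      = dmat i (Γ j) p - dmat j (Γ i) p + (Γ i p * Γ j p - Γ j p * Γ i p) := by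
    ext l k
    have e1 : pd i (christoffel d.gmet l j k) p = pd i (fun q => Γ j q l k) p :=
      pd_congr (by filter_upwards [hchr] with q hq using hq l j k) i
    have e2 : pd j (christoffel d.gmet l i k) p = pd j (fun q => Γ i q l k) p :=
      pd_congr (by filter_upwards [hchr] with q hq using hq l i k) j
    have e3 : ∀ a b c : Fin n, christoffel d.gmet a b c p = Γ b p a c := fun a b c =>
      christoffel_eq hd hp a b c
    simp only [riemann, Matrix.of_apply, e1, e2, e3]
    simp only [Matrix.add_apply, Matrix.sub_apply, Matrix.mul_apply, dmat,
      Matrix.of_apply, Finset.sum_sub_distrib]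
  -- derivative bookkeeping
  have hMdφ : Mdiff (fun q => d.φ q) p := (msm_phi hd hU).mdiff
  have hMdΓ : ∀ m, Mdiff (Γ m) p := fun m => (hsmΓ m).mdiff
  have hMdω : ∀ m, Mdiff (fun q => d.ω m q) p := fun m => (msm_omega hd hU m).mdiff
  have hMddφ : ∀ m, Mdiff (fun q => dmat m (fun r => d.φ r) q) p := fun m a b =>
    ((msm_phi hd hU).dmat_smooth m a b).differentiableAt (by simp)
  have hkey : ∀ a b : Fin n, d.φ p * dmat a (Γ b) p
      = dmat a (fun q => dmat b (fun r => d.φ r) q) p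
        + dmat a (fun q => d.ω b q) p * d.φ p
        + d.ω b p * Pm d a p - d.ω b p * (d.ω a p * d.φ p)
        - Pm d a p * Γ b p + d.ω a p * Pm d b p := by
    intro a b
    have hf1 : dmat a (fun q => d.φ q * Γ b q) p = dmat a (fun q => Pm d b q) p :=
      dmat_congr (by filter_upwards [hphiΓ] with q hq using hq b) a
    have hf2 : dmat a (fun q => d.φ q * Γ b q) p
        = dmat a (fun q => d.φ q) p * Γ b p + d.φ p * dmat a (Γ b) p :=
      dmat_mul hMdφ (hMdΓ b) a
    have hPmdec : dmat a (fun q => Pm d b q) p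
        = dmat a (fun q => dmat b (fun r => d.φ r) q) p
          + (dmat a (fun q => d.ω b q) p * d.φ p + d.ω b p * dmat a (fun q => d.φ q) p) := by
      have h1 : dmat a (fun q => Pm d b q) p
          = dmat a (fun q => dmat b (fun r => d.φ r) q) p
            + dmat a (fun q => d.ω b q * d.φ q) p :=
        dmat_add (A := fun q => dmat b (fun r => d.φ r) q)
          (B := fun q => d.ω b q * d.φ q) (hMddφ b) ((hMdω b).mul hMdφ) a
      rw [h1, dmat_mul (hMdω b) hMdφ a]
    have hdφ : dmat a (fun q => d.φ q) p = Pm d a p - d.ω a p * d.φ p := by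
      simp [Pm]
    have : d.φ p * dmat a (Γ b) p
        = dmat a (fun q => Pm d b q) p - dmat a (fun q => d.φ q) p * Γ b p := by
      rw [← hf1, hf2]; abel
    rw [this, hPmdec, hdφ]
    have hAssoc : (Pm d a p - d.ω a p * d.φ p) * Γ b p
        = Pm d a p * Γ b p - d.ω a p * Pm d b p := by
      rw [Matrix.sub_mul, Matrix.mul_assoc, hphiΓp b]
    rw [hAssoc]
    have hω : d.ω b p * (Pm d a p - d.ω a p * d.φ p)
        = d.ω b p * Pm d a p - d.ω b p * (d.ω a p * d.φ p) := by
      rw [Matrix.mul_sub]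
    rw [hω]
    abel
  -- Hessian symmetry
  have hHess : dmat i (fun q => dmat j (fun r => d.φ r) q) p
      = dmat j (fun q => dmat i (fun r => d.φ r) q) p := by
    ext a b
    exact pd_comm (msm_phi hd hU a b) i j
  -- assemble
  rw [he]
  have hq1 : d.φ p * (Γ i p * Γ j p) = Pm d i p * Γ j p := by
    rw [← Matrix.mul_assoc, hphiΓp i]
  have hq2 : d.φ p * (Γ j p * Γ i p) = Pm d j p * Γ i p := by
    rw [← Matrix.mul_assoc, hphiΓp j]
  rw [Matrix.mul_add, Matrix.mul_sub, Matrix.mul_sub, hq1, hq2,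
    hkey i j, hkey j i, hHess]
  simp only [curvC]
  noncomm_ring

end CTB

end Loc
namespace Loc

open Matrix Filter

variable {n : ℕ}

lemma double_factor {u v x y : Fin n → ℝ} :
    ∑ c, ∑ b, u c * (v b * (x c * y b)) = (∑ c, u c * x c) * (∑ b, v b * y b) := by
  rw [Finset.sum_mul_sum]
  exact Finset.sum_congr rfl fun c _ => Finset.sum_congr rfl fun b _ => by ring

namespace FB

variable {d : FB n} {p : Pt n} (hfb : d.IsFB) (hgauss : d.GaussEq)
  (hp : p ∈ d.ctb1.reg)

set_option linter.unusedSectionVars false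

include hfb hgauss hp

lemma riemann_entry (i j l k : Fin n) :
    riemann d.ctb1.gmet l i j k p
      = (1 : Mat n) l j * d.FF2 p i k
        + d.ctb1.gmet p j k * ((d.ξ p)⁻¹ * d.ζ p) l i
        - ((d.ξ p)⁻¹ * d.ζ p) l j * d.ctb1.gmet p i k
        - d.FF2 p j k * (1 : Mat n) l i := by
  classical
  have hd1 : d.ctb1.IsCTB := hfb.1
  have hU : p ∈ d.U := hp.1
  have hΦdet : (d.ξ p).det ≠ 0 := hp.2
  have hHdet : (d.h p).det ≠ 0 := CTB.h_det_ne hd1 hp.1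
  have hHsymm : (d.h p)ᵀ = d.h p := CTB.h_symm hd1 hp.1
  set Φ := d.ξ p with hΦ
  set H := d.h p with hH
  set A := (d.ξ p)ᵀ * d.h p with hA
  set B := (d.ζ p)ᵀ * d.h p with hB
  set W := Φ⁻¹ * H⁻¹ with hW
  set C := Φ⁻¹ * d.ζ p with hC
  set S := d.FF2 p with hS
  set g := d.ctb1.gmet p with hg
  set M' : Mat n := Matrix.of fun c c' =>
      A j c * B i c' - A j c' * B i c + (B j c * A i c' - B j c' * A i c) with hM'
  -- Gauss equation in matrix form
  have hgaussM : (d.curv i j p)ᵀ * H = M' := by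
    ext c c'
    simp only [Matrix.mul_apply, Matrix.transpose_apply, hM', Matrix.of_apply]
    exact hgauss p hU i j c c'
  have hcurv : d.curv i j p = H⁻¹ * M'ᵀ := by
    have h1 : (d.curv i j p)ᵀ = M' * H⁻¹ := by
      rw [← hgaussM, Matrix.mul_assoc, Matrix.mul_nonsing_inv _ hHdet.isUnit,
        Matrix.mul_one]
    calc d.curv i j p = ((d.curv i j p)ᵀ)ᵀ := (Matrix.transpose_transpose _).symm
      _ = (M' * H⁻¹)ᵀ := by rw [h1]
      _ = (H⁻¹)ᵀ * M'ᵀ := Matrix.transpose_mul _ _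
      _ = H⁻¹ * M'ᵀ := by rw [Matrix.transpose_nonsing_inv, hHsymm]
  have hcurvC : curvC d.ctb1 i j p = d.curv i j p := by
    have hωeq : d.ctb1.ω = d.ω := rfl
    ext a b
    simp only [curvC, FB.curv, dmat, hωeq, Matrix.sub_apply, Matrix.add_apply,
      Matrix.mul_apply, Matrix.of_apply, ← Finset.sum_sub_distrib]
  have hRm : Φ * Matrix.of (fun l' k' => riemann d.ctb1.gmet l' i j k' p)
      = d.curv i j p * Φ := by
    rw [← hcurvC]
    exact CTB.phi_mul_riemann hd1 hp i j
  have hRm2 : Matrix.of (fun l' k' => riemann d.ctb1.gmet l' i j k' p)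
      = W * (M'ᵀ * Φ) := by
    have hinv : ∀ X : Mat n, Φ⁻¹ * (Φ * X) = X := fun X => by
      rw [← Matrix.mul_assoc, Matrix.nonsing_inv_mul _ hΦdet.isUnit, Matrix.one_mul]
    calc Matrix.of (fun l' k' => riemann d.ctb1.gmet l' i j k' p)
        = Φ⁻¹ * (Φ * Matrix.of (fun l' k' => riemann d.ctb1.gmet l' i j k' p)) :=
          (hinv _).symm
      _ = Φ⁻¹ * (d.curv i j p * Φ) := by rw [hRm]
      _ = Φ⁻¹ * (H⁻¹ * M'ᵀ * Φ) := by rw [hcurv]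
      _ = W * (M'ᵀ * Φ) := by rw [hW, Matrix.mul_assoc, Matrix.mul_assoc]
  -- contraction identities
  have hWA : W * Aᵀ = 1 := by
    rw [hW, hA, Matrix.transpose_mul, Matrix.transpose_transpose, hHsymm, ← hΦ,
      Matrix.mul_assoc, ← Matrix.mul_assoc (H⁻¹), Matrix.nonsing_inv_mul _ hHdet.isUnit,
      Matrix.one_mul, Matrix.nonsing_inv_mul _ hΦdet.isUnit]
  have hWB : W * Bᵀ = C := by
    rw [hW, hB, Matrix.transpose_mul, Matrix.transpose_transpose, hHsymm,
      Matrix.mul_assoc, ← Matrix.mul_assoc (H⁻¹), Matrix.nonsing_inv_mul _ hHdet.isUnit,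
      Matrix.one_mul, hC]
  have hAΦ : A * Φ = g := rfl
  have hBΦ : B * Φ = -S := by
    have h1 : (B * Φ)ᵀ = (d.ξ p)ᵀ * d.h p * d.ζ p := by
      rw [hB, Matrix.transpose_mul, Matrix.transpose_mul, Matrix.transpose_transpose,
        hHsymm, hΦ, Matrix.mul_assoc]
    have h2 : ((d.ξ p)ᵀ * d.h p * d.ζ p)ᵀ = (d.ξ p)ᵀ * d.h p * d.ζ p := hfb.2.2 p hU
    have h3 : B * Φ = (d.ξ p)ᵀ * d.h p * d.ζ p := by
      rw [← h2, ← h1, Matrix.transpose_transpose]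
    rw [h3, hS]
    simp [FB.FF2]
  have c1 : ∀ l' j', ∑ c, W l' c * A j' c = (1 : Mat n) l' j' := by
    intro l' j'
    have := congrFun (congrFun hWA l') j'
    simpa [Matrix.mul_apply, Matrix.transpose_apply] using this
  have c2 : ∀ l' i', ∑ c, W l' c * B i' c = C l' i' := by
    intro l' i'
    have := congrFun (congrFun hWB l') i'
    simpa [Matrix.mul_apply, Matrix.transpose_apply] using this
  have c3 : ∀ j' k', ∑ b, A j' b * Φ b k' = g j' k' := by
    intro j' k'
    have := congrFun (congrFun hAΦ j') k'
    simpa [Matrix.mul_apply] using this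
  have c4 : ∀ j' k', ∑ b, B j' b * Φ b k' = -S j' k' := by
    intro j' k'
    have := congrFun (congrFun hBΦ j') k'
    simpa [Matrix.mul_apply] using this
  -- put everything together
  have hentry : riemann d.ctb1.gmet l i j k p = ∑ c, ∑ b, W l c * (M' b c * Φ b k) := by
    have := congrFun (congrFun hRm2 l) k
    rw [Matrix.of_apply] at this
    rw [this, Matrix.mul_apply]
    refine Finset.sum_congr rfl fun c _ => ?_
    rw [Matrix.mul_apply, Finset.mul_sum]
    refine Finset.sum_congr rfl fun b _ => ?_
    rw [Matrix.transpose_apply]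
  rw [hentry]
  have hsplit : ∀ c b, W l c * (M' b c * Φ b k)
      = W l c * (A j b * (B i c * Φ b k)) - W l c * (B i b * (A j c * Φ b k))
        + (W l c * (B j b * (A i c * Φ b k)) - W l c * (A i b * (B j c * Φ b k))) := by
    intro c b
    simp only [hM', Matrix.of_apply]
    ring
  calc ∑ c, ∑ b, W l c * (M' b c * Φ b k)
      = (∑ c, ∑ b, W l c * (A j b * (B i c * Φ b k)))
        - (∑ c, ∑ b, W l c * (B i b * (A j c * Φ b k)))
        + ((∑ c, ∑ b, W l c * (B j b * (A i c * Φ b k)))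
          - ∑ c, ∑ b, W l c * (A i b * (B j c * Φ b k))) := by
        simp only [hsplit, Finset.sum_add_distrib, Finset.sum_sub_distrib]
    _ = (∑ c, W l c * B i c) * (∑ b, A j b * Φ b k)
        - (∑ c, W l c * A j c) * (∑ b, B i b * Φ b k)
        + ((∑ c, W l c * A i c) * (∑ b, B j b * Φ b k)
          - (∑ c, W l c * B j c) * (∑ b, A i b * Φ b k)) := by
        rw [double_factor, double_factor, double_factor, double_factor]
    _ = C l i * g j k - (1 : Mat n) l j * (-S i k)
        + ((1 : Mat n) l i * (-S j k) - C l j * g i k) := by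
        rw [c1 l j, c2 l i, c3 j k, c4 i k, c1 l i, c2 l j, c3 i k, c4 j k]
    _ = (1 : Mat n) l j * S i k + g j k * C l i - C l j * g i k - S j k * (1 : Mat n) l i := by
        ring

end FB

end Loc
namespace Loc

namespace FB

open Matrix

variable {n : ℕ} {d : FB n} {p : Pt n} (hfb : d.IsFB) (hgauss : d.GaussEq)
  (hp : p ∈ d.ctb1.reg)

set_option linter.unusedSectionVars false

include hfb hp

lemma gmet_symm : (d.ctb1.gmet p)ᵀ = d.ctb1.gmet p := by
  have hHsymm : (d.h p)ᵀ = d.h p := CTB.h_symm hfb.1 hp.1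
  show ((d.ξ p)ᵀ * d.h p * d.ξ p)ᵀ = _
  rw [Matrix.transpose_mul, Matrix.transpose_mul, Matrix.transpose_transpose, hHsymm,
    ← Matrix.mul_assoc]
  rfl

lemma FF2_symm : (d.FF2 p)ᵀ = d.FF2 p := by
  have h2 : ((d.ξ p)ᵀ * d.h p * d.ζ p)ᵀ = (d.ξ p)ᵀ * d.h p * d.ζ p := hfb.2.2 p hp.1
  show (-((d.ξ p)ᵀ * d.h p * d.ζ p))ᵀ = -((d.ξ p)ᵀ * d.h p * d.ζ p)
  rw [Matrix.transpose_neg, h2]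

lemma g_mul_C : d.ctb1.gmet p * ((d.ξ p)⁻¹ * d.ζ p) = -(d.FF2 p) := by
  have hdet : (d.ξ p).det ≠ 0 := hp.2
  have hξ : d.ξ p * ((d.ξ p)⁻¹ * d.ζ p) = d.ζ p := by
    rw [← Matrix.mul_assoc, Matrix.mul_nonsing_inv _ hdet.isUnit, Matrix.one_mul]
  show (d.ξ p)ᵀ * d.h p * d.ξ p * ((d.ξ p)⁻¹ * d.ζ p) = -(d.FF2 p)
  rw [Matrix.mul_assoc ((d.ξ p)ᵀ * d.h p), hξ]
  show _ = -(-((d.ξ p)ᵀ * d.h p * d.ζ p))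
  rw [neg_neg]

lemma ginv_FF2 : (d.ctb1.gmet p)⁻¹ * d.FF2 p = -((d.ξ p)⁻¹ * d.ζ p) := by
  have hg : (d.ctb1.gmet p)⁻¹ * d.ctb1.gmet p = 1 :=
    Matrix.nonsing_inv_mul _ (CTB.gmet_det_ne hfb.1 hp).isUnit
  calc (d.ctb1.gmet p)⁻¹ * d.FF2 p
      = (d.ctb1.gmet p)⁻¹ * -(d.ctb1.gmet p * ((d.ξ p)⁻¹ * d.ζ p)) := by
        rw [g_mul_C hfb hp, neg_neg]
    _ = -((d.ctb1.gmet p)⁻¹ * d.ctb1.gmet p * ((d.ξ p)⁻¹ * d.ζ p)) := by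
        rw [Matrix.mul_neg, Matrix.mul_assoc]
    _ = -((d.ξ p)⁻¹ * d.ζ p) := by rw [hg, Matrix.one_mul]

lemma trace_ginv_FF2 :
    Matrix.trace ((d.ctb1.gmet p)⁻¹ * d.FF2 p) = -Matrix.trace ((d.ξ p)⁻¹ * d.ζ p) := by
  rw [ginv_FF2 hfb hp, Matrix.trace_neg]

lemma Ct_g (j k : Fin n) :
    ∑ i, ((d.ξ p)⁻¹ * d.ζ p) i j * d.ctb1.gmet p i k = -(d.FF2 p j k) := by
  have h1 : (((d.ξ p)⁻¹ * d.ζ p)ᵀ * d.ctb1.gmet p) j k = -(d.FF2 p j k) := by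
    have h2 : ((d.ξ p)⁻¹ * d.ζ p)ᵀ * d.ctb1.gmet p
        = (d.ctb1.gmet p * ((d.ξ p)⁻¹ * d.ζ p))ᵀ := by
      conv_rhs => rw [Matrix.transpose_mul]
      rw [gmet_symm hfb hp]
    rw [h2, g_mul_C hfb hp, Matrix.transpose_neg, FF2_symm hfb hp]
    rfl
  rw [← h1, Matrix.mul_apply]
  exact Finset.sum_congr rfl fun i _ => rfl

include hgauss

lemma ricci_eq (j k : Fin n) :
    ricci d.ctb1.gmet j k p =
      -(Matrix.trace ((d.ctb1.gmet p)⁻¹ * d.FF2 p)) * d.ctb1.gmet p j k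
        - (n - 2 : ℝ) * d.FF2 p j k := by
  classical
  have hent : ∀ i : Fin n, riemann d.ctb1.gmet i i j k p
      = (1 : Mat n) i j * d.FF2 p i k
        + d.ctb1.gmet p j k * ((d.ξ p)⁻¹ * d.ζ p) i i
        - ((d.ξ p)⁻¹ * d.ζ p) i j * d.ctb1.gmet p i k
        - d.FF2 p j k * (1 : Mat n) i i := fun i =>
    riemann_entry hfb hgauss hp i j i k
  have h0 : ricci d.ctb1.gmet j k p = ∑ i, riemann d.ctb1.gmet i i j k p := rfl
  rw [h0]
  simp only [hent]
  rw [Finset.sum_sub_distrib, Finset.sum_sub_distrib, Finset.sum_add_distrib]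
  have A1 : ∑ i, (1 : Mat n) i j * d.FF2 p i k = d.FF2 p j k := by
    simp [Matrix.one_apply, ite_mul]
  have A2 : ∑ i, d.ctb1.gmet p j k * ((d.ξ p)⁻¹ * d.ζ p) i i
      = d.ctb1.gmet p j k * Matrix.trace ((d.ξ p)⁻¹ * d.ζ p) := by
    rw [Matrix.trace, Finset.mul_sum]
    rfl
  have A4 : ∑ i, d.FF2 p j k * (1 : Mat n) i i = d.FF2 p j k * (n : ℝ) := by
    rw [← Finset.mul_sum]
    congr 1
    simp [Matrix.one_apply]
  rw [A1, A2, Ct_g hfb hp j k, A4, trace_ginv_FF2 hfb hp]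
  ring

lemma scalar_eq :
    scalarCurv d.ctb1.gmet p =
      -(2 * (n - 1 : ℝ)) * Matrix.trace ((d.ctb1.gmet p)⁻¹ * d.FF2 p) := by
  classical
  have hginv : (d.ctb1.gmet p)⁻¹ * d.ctb1.gmet p = 1 :=
    Matrix.nonsing_inv_mul _ (CTB.gmet_det_ne hfb.1 hp).isUnit
  have h0 : scalarCurv d.ctb1.gmet p
      = ∑ j, ∑ k, (d.ctb1.gmet p)⁻¹ j k * ricci d.ctb1.gmet j k p := rfl
  rw [h0]
  simp only [fun j k => ricci_eq hfb hgauss hp j k]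
  have B1 : ∑ j, ∑ k, (d.ctb1.gmet p)⁻¹ j k * d.ctb1.gmet p j k = (n : ℝ) := by
    have e : ∀ j k : Fin n, d.ctb1.gmet p j k = d.ctb1.gmet p k j := fun j k =>
      congrFun (congrFun (gmet_symm hfb hp) k) j
    calc ∑ j, ∑ k, (d.ctb1.gmet p)⁻¹ j k * d.ctb1.gmet p j k
        = ∑ j, ∑ k, (d.ctb1.gmet p)⁻¹ j k * d.ctb1.gmet p k j :=
          Finset.sum_congr rfl fun j _ => Finset.sum_congr rfl fun k _ => by rw [← e j k]
      _ = Matrix.trace ((d.ctb1.gmet p)⁻¹ * d.ctb1.gmet p) := by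
          rw [Matrix.trace]
          exact Finset.sum_congr rfl fun j _ => by rw [Matrix.diag, Matrix.mul_apply]
      _ = (n : ℝ) := by rw [hginv]; simp [Matrix.trace_one]
  have B2 : ∑ j, ∑ k, (d.ctb1.gmet p)⁻¹ j k * d.FF2 p j k
      = Matrix.trace ((d.ctb1.gmet p)⁻¹ * d.FF2 p) := by
    have e : ∀ j k : Fin n, d.FF2 p j k = d.FF2 p k j := fun j k =>
      congrFun (congrFun (FF2_symm hfb hp) k) j
    calc ∑ j, ∑ k, (d.ctb1.gmet p)⁻¹ j k * d.FF2 p j k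
        = ∑ j, ∑ k, (d.ctb1.gmet p)⁻¹ j k * d.FF2 p k j :=
          Finset.sum_congr rfl fun j _ => Finset.sum_congr rfl fun k _ => by rw [← e j k]
      _ = Matrix.trace ((d.ctb1.gmet p)⁻¹ * d.FF2 p) := by
          rw [Matrix.trace]
          exact Finset.sum_congr rfl fun j _ => by rw [Matrix.diag, Matrix.mul_apply]
  have hdistr : ∀ j : Fin n, ∑ k, (d.ctb1.gmet p)⁻¹ j k *
        (-(Matrix.trace ((d.ctb1.gmet p)⁻¹ * d.FF2 p)) * d.ctb1.gmet p j k
          - (n - 2 : ℝ) * d.FF2 p j k)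
      = -(Matrix.trace ((d.ctb1.gmet p)⁻¹ * d.FF2 p))
          * (∑ k, (d.ctb1.gmet p)⁻¹ j k * d.ctb1.gmet p j k)
        - (n - 2 : ℝ) * ∑ k, (d.ctb1.gmet p)⁻¹ j k * d.FF2 p j k := by
    intro j
    rw [Finset.mul_sum, Finset.mul_sum, ← Finset.sum_sub_distrib]
    exact Finset.sum_congr rfl fun k _ => by ring
  simp only [hdistr]
  rw [Finset.sum_sub_distrib, ← Finset.mul_sum, ← Finset.mul_sum, B1, B2]
  ring

end FB

end Loc
/-- let `(Mⁿ,E,⟨,⟩,D,ξ,ζ)` (`n ≥ 2`) be a frontal bundle satisfying the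
Gauss equation.  On the regular set of `ξ`, with `g = ξ*⟨,⟩` the first and `II` the
second fundamental form, `Ric_g = -Trace_g(II)·g - (n-2)·II` and
`S_g = -2(n-1)·Trace_g(II)`.  In particular for `n = 2` (a spacelike surface in `Q³₊`)
the Gaussian curvature `K = S_g/2` satisfies `K = -Trace_g(II) = -2H`, where
`H = (1/2)Trace_g(II)` is the mean curvature. -/
theorem statement15 {n : ℕ} (hn : 2 ≤ n) (d : Loc.FB n) (hfb : d.IsFB)
    (hgauss : d.GaussEq) :
    (∀ p ∈ d.ctb1.reg, ∀ i j : Fin n,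
      ricci d.ctb1.gmet i j p =
        -(Matrix.trace ((d.ctb1.gmet p)⁻¹ * d.FF2 p)) * d.ctb1.gmet p i j
          - (n - 2 : ℝ) * d.FF2 p i j) ∧
    (∀ p ∈ d.ctb1.reg,
      scalarCurv d.ctb1.gmet p =
        -(2 * (n - 1 : ℝ)) * Matrix.trace ((d.ctb1.gmet p)⁻¹ * d.FF2 p)) ∧
    (n = 2 → ∀ p ∈ d.ctb1.reg,
      scalarCurv d.ctb1.gmet p / 2 =
        -(Matrix.trace ((d.ctb1.gmet p)⁻¹ * d.FF2 p)) ∧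
      scalarCurv d.ctb1.gmet p / 2 =
        -2 * (Matrix.trace ((d.ctb1.gmet p)⁻¹ * d.FF2 p) / 2)) := by
  refine ⟨fun p hp i j => FB.ricci_eq hfb hgauss hp i j,
    fun p hp => FB.scalar_eq hfb hgauss hp, fun h2 p hp => ?_⟩
  have hs := FB.scalar_eq hfb hgauss hp
  subst h2
  rw [hs]
  constructor <;> · push_cast; ring
end
end
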